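/- In the coarse-grain model, the Fibonacci schedule assigning elimination of position (i,k) to time step coarse(i,k) is a valid coarse-grain schedule, and its makespan (critical path length) equals x + 2q − 2 when p > q ≥ 1, and x + 2q − 4 when p = q > 1, where x is the least positive integer such that x(x+1)/2 ≥ p − 1. -/

import Mathlib

namespace CoarseQR

/-- `(i, k)` is a position to be zeroed out in the coarse-grain model of the QR
factorization of a `p × q` matrix: `1 ≤ k ≤ min p q` and `k < i ≤ p`. -/
def IsPos (p q i k : ℕ) : Prop := 1 ≤ k ∧ k ≤ min p q ∧ k < i ∧ i ≤ p

/-- `piv` and `σ` describe a valid coarse-grain schedule of a `p × q` matrix: position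
`(i, k)` is zeroed out by `elim(i, piv i k, k)` (one time unit) at time step `σ i k ≥ 1`;
eliminations sharing a time step involve pairwise disjoint pairs of rows; `elim(i, piv, k)`
comes strictly after all eliminations `elim(i, *, k')` and `elim(piv, *, k')` with
`k' < k`, and strictly before the elimination `elim(piv, *, k)` of its pivot row. -/
def CoarseValidSchedule (p q : ℕ) (piv σ : ℕ → ℕ → ℕ) : Prop :=
  (∀ i k, IsPos p q i k → 1 ≤ σ i k ∧ 1 ≤ piv i k ∧ piv i k ≤ p ∧ piv i k ≠ i) ∧
  (∀ i k i' k', IsPos p q i k → IsPos p q i' k' → (i, k) ≠ (i', k') →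
      σ i k = σ i' k' →
      i ≠ i' ∧ i ≠ piv i' k' ∧ piv i k ≠ i' ∧ piv i k ≠ piv i' k') ∧
  (∀ i k k', IsPos p q i k → 1 ≤ k' → k' < k → σ i k' < σ i k) ∧
  (∀ i k k', IsPos p q i k → 1 ≤ k' → k' < k → k' < piv i k →
      σ (piv i k) k' < σ i k) ∧
  (∀ i k, IsPos p q i k → k < piv i k → σ i k < σ (piv i k) k)

/-- The makespan (critical path length) of a coarse-grain schedule: the largest time
step used. -/
noncomputable def makespan (p q : ℕ) (σ : ℕ → ℕ → ℕ) : ℕ :=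
  sSup { t : ℕ | ∃ i k, IsPos p q i k ∧ t = σ i k }
/-- The least positive integer `x` such that `x * (x + 1) / 2 ≥ p - 1`. -/
noncomputable def fibX (p : ℕ) : ℕ := sInf {x : ℕ | 1 ≤ x ∧ p - 1 ≤ x * (x + 1) / 2}

/-- The least positive integer `y` such that `i ≤ y * (y + 1) / 2 + 1`. -/
noncomputable def fibY (i : ℕ) : ℕ := sInf {y : ℕ | 1 ≤ y ∧ i ≤ y * (y + 1) / 2 + 1}

/-- The time step at which the coarse-grain Fibonacci schedule zeroes out position
`(i, k)`: `coarse(i, 1) = x - y + 1` and `coarse(i, k) = coarse(i - 1, k - 1) + 2`. -/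
noncomputable def fibCoarse (p i k : ℕ) : ℕ :=
  (fibX p - fibY (i - k + 1) + 1) + 2 * (k - 1)

/-- The number of positions of column `k` zeroed out at the same step as `(i, k)`. -/
noncomputable def fibZ (p i k : ℕ) : ℕ :=
  ((Finset.Icc (k + 1) p).filter fun i' => fibCoarse p i' k = fibCoarse p i k).card

/-- Fibonacci pivot: `z` positions zeroed out at the same step use the `z` rows just
above them, paired in the natural order. -/
noncomputable def fibPiv (p i k : ℕ) : ℕ := i - fibZ p i k

/-!
Let `x = fibX p`, `tri y = y (y + 1) / 2`, and call `fibY (i - k + 1)` the level of `(i, k)`.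
In column `k` the positions of level `y` are the rows `tri (y - 1) + k < i ≤ tri y + k`
(cut off at `p`): a block of at most `y` rows, all zeroed at step `x - y + 2k - 1`. Its pivots
are the rows just above it, which have level `y - 1` in column `k` (so are zeroed one step
later) and level at least `y - 1` in every earlier column (so are zeroed there at least one step
earlier). Two positions zeroed at the same step in columns `k < k'` have levels `y` and
`y + 2 (k' - k)`, so the pivots of the second lie below the whole block of the first and the
four rows involved are distinct. The last step is reached at the top row `k + 1` of the last
column.
-/

def tri (y : ℕ) : ℕ := y * (y + 1) / 2

@[simp] lemma tri_zero : tri 0 = 0 := rfl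

@[simp] lemma tri_one : tri 1 = 1 := rfl

lemma tri_succ (y : ℕ) : tri (y + 1) = tri y + (y + 1) := by
  unfold tri
  rw [show (y + 1) * (y + 1 + 1) = y * (y + 1) + (y + 1) * 2 by ring,
    Nat.add_mul_div_right _ _ two_pos]

lemma tri_sub_one_add (y : ℕ) : tri (y - 1) + y = tri y := by
  rcases y with _ | y
  · rfl
  · simp [tri_succ]

lemma tri_mono : Monotone tri :=
  monotone_nat_of_le_succ fun y => by rw [tri_succ]; omega

lemma fibY_spec (j : ℕ) : 1 ≤ fibY j ∧ j ≤ tri (fibY j) + 1 :=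
  Nat.sInf_mem (s := {y : ℕ | 1 ≤ y ∧ j ≤ tri y + 1})
    ⟨j + 1, by omega, by have := tri_succ j; omega⟩

lemma one_le_fibY (j : ℕ) : 1 ≤ fibY j := (fibY_spec j).1

lemma le_tri_fibY (j : ℕ) : j ≤ tri (fibY j) + 1 := (fibY_spec j).2

lemma fibY_le_iff {j y : ℕ} (hy : 1 ≤ y) : fibY j ≤ y ↔ j ≤ tri y + 1 :=
  ⟨fun h => (le_tri_fibY j).trans (by simpa using tri_mono h),
    fun h => Nat.sInf_le (s := {y : ℕ | 1 ≤ y ∧ j ≤ tri y + 1}) ⟨hy, h⟩⟩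

lemma lt_fibY_of_tri_lt {j y : ℕ} (h : tri y + 1 < j) : y < fibY j := by
  rcases Nat.eq_zero_or_pos y with rfl | hy
  · exact one_le_fibY j
  · exact lt_of_not_ge fun hle => by have := (fibY_le_iff hy).mp hle; omega

lemma fibY_mono : Monotone fibY := fun _ _ hj =>
  (fibY_le_iff (one_le_fibY _)).mpr (hj.trans (le_tri_fibY _))

lemma tri_fibY_sub_one_lt {j : ℕ} (hj : 2 ≤ j) : tri (fibY j - 1) + 1 < j := by
  rcases (one_le_fibY j).eq_or_lt with h | h
  · rw [← h, Nat.sub_self, tri_zero]; omega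
  · exact lt_of_not_ge fun hle => by have := (fibY_le_iff (by omega)).mpr hle; omega

lemma fibY_eq_iff {j y : ℕ} (hj : 2 ≤ j) (hy : 1 ≤ y) :
    fibY j = y ↔ tri (y - 1) + 1 < j ∧ j ≤ tri y + 1 := by
  constructor
  · rintro rfl
    exact ⟨tri_fibY_sub_one_lt hj, le_tri_fibY j⟩
  · rintro ⟨hlo, hhi⟩
    have := (fibY_le_iff hy).mpr hhi
    have := lt_fibY_of_tri_lt hlo
    omega

@[simp] lemma fibY_two : fibY 2 = 1 := (fibY_eq_iff le_rfl le_rfl).mpr (by simp)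

lemma fibX_eq_fibY (p : ℕ) : fibX p = fibY p := by
  unfold fibX fibY
  congr 1
  ext x
  constructor <;> rintro ⟨h1, h2⟩ <;> exact ⟨h1, by omega⟩

section Schedule

variable {p q i k : ℕ}

lemma fibY_le_fibX (h : IsPos p q i k) : fibY (i - k + 1) ≤ fibX p := by
  obtain ⟨hk, -, hki, hip⟩ := h
  rw [fibX_eq_fibY]
  exact fibY_mono (by omega)

lemma fibCoarse_add_fibY (h : IsPos p q i k) :
    fibCoarse p i k + fibY (i - k + 1) = fibX p + 2 * k - 1 := by
  have := fibY_le_fibX h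
  have := h.1
  unfold fibCoarse
  omega

lemma fibZ_eq (h : IsPos p q i k) :
    fibZ p i k = min p (tri (fibY (i - k + 1)) + k) - (tri (fibY (i - k + 1) - 1) + k) := by
  set y := fibY (i - k + 1)
  have hblock : (Finset.Icc (k + 1) p).filter (fun i' => fibCoarse p i' k = fibCoarse p i k)
      = Finset.Icc (tri (y - 1) + k + 1) (min p (tri y + k)) := by
    ext i'
    simp only [Finset.mem_filter, Finset.mem_Icc]
    have hy := fibY_eq_iff (j := i' - k + 1) (y := y)
    constructor
    · rintro ⟨⟨hki', hi'p⟩, hσ⟩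
      have := fibCoarse_add_fibY h
      have := fibCoarse_add_fibY (i := i') ⟨h.1, h.2.1, hki', hi'p⟩
      have := hy (by omega) (one_le_fibY _)
      omega
    · rintro ⟨hlo, hhi⟩
      have hy' := (hy (by omega) (one_le_fibY _)).mpr ⟨by omega, by omega⟩
      have := fibCoarse_add_fibY h
      have := fibCoarse_add_fibY (i := i') ⟨h.1, h.2.1, by omega, by omega⟩
      omega
  rw [fibZ, hblock, Nat.card_Icc]
  omega

lemma block_bounds (h : IsPos p q i k) :
    tri (fibY (i - k + 1) - 1) + k < i ∧ i ≤ tri (fibY (i - k + 1)) + k := by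
  have := tri_fibY_sub_one_lt (j := i - k + 1) (by have := h.2.2.1; omega)
  have := le_tri_fibY (i - k + 1)
  have := h.2.2.1
  omega

lemma one_le_fibZ (h : IsPos p q i k) : 1 ≤ fibZ p i k := by
  have := block_bounds h
  have := h.2.2.2
  rw [fibZ_eq h]
  omega

lemma fibZ_le_fibY (h : IsPos p q i k) : fibZ p i k ≤ fibY (i - k + 1) := by
  have := tri_sub_one_add (fibY (i - k + 1))
  rw [fibZ_eq h]
  omega

lemma fibPiv_lt (h : IsPos p q i k) : fibPiv p i k < i := by
  have := one_le_fibZ h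
  have := h.2.2.1
  unfold fibPiv
  omega

lemma fibPiv_le (h : IsPos p q i k) : fibPiv p i k ≤ tri (fibY (i - k + 1) - 1) + k := by
  have := block_bounds h
  have := h.2.2.2
  rw [fibPiv, fibZ_eq h]
  omega

lemma le_fibPiv (h : IsPos p q i k) : tri (fibY (i - k + 1) - 2) + k ≤ fibPiv p i k := by
  have htri := tri_sub_one_add (fibY (i - k + 1) - 1)
  rw [Nat.sub_sub, one_add_one_eq_two] at htri
  have := block_bounds h
  have := fibZ_le_fibY h
  unfold fibPiv
  omega

lemma fibSchedule_bounds (h : IsPos p q i k) :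
    1 ≤ fibCoarse p i k ∧ 1 ≤ fibPiv p i k ∧ fibPiv p i k ≤ p ∧ fibPiv p i k ≠ i := by
  have := fibPiv_lt h
  have := le_fibPiv h
  have := h.1
  have := h.2.2.2
  exact ⟨by unfold fibCoarse; omega, by omega, by omega, by omega⟩

lemma fibSchedule_disjoint_of_eq_column {i' : ℕ} (h : IsPos p q i k) (h' : IsPos p q i' k)
    (hi : i ≠ i') (he : fibCoarse p i k = fibCoarse p i' k) :
    i ≠ fibPiv p i' k ∧ fibPiv p i k ≠ i' ∧ fibPiv p i k ≠ fibPiv p i' k := by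
  have hy : fibY (i - k + 1) = fibY (i' - k + 1) := by
    have := fibCoarse_add_fibY h
    have := fibCoarse_add_fibY h'
    omega
  have hz : fibZ p i k = fibZ p i' k := by rw [fibZ_eq h, fibZ_eq h', hy]
  obtain ⟨hlo, -⟩ := block_bounds h
  obtain ⟨hlo', -⟩ := block_bounds h'
  have hpiv := fibPiv_le h
  have hpiv' := fibPiv_le h'
  rw [hy] at hlo hpiv
  have := le_fibPiv h
  have := le_fibPiv h'
  have := h.1
  simp only [fibPiv] at *
  omega

lemma lt_fibPiv_of_fibCoarse_eq {i' k' : ℕ} (h : IsPos p q i k) (h' : IsPos p q i' k')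
    (hk : k < k') (he : fibCoarse p i k = fibCoarse p i' k') : i < fibPiv p i' k' := by
  have := fibCoarse_add_fibY h
  have := fibCoarse_add_fibY h'
  have hy : fibY (i - k + 1) ≤ fibY (i' - k' + 1) - 2 := by omega
  have := tri_mono hy
  have := block_bounds h
  have := le_fibPiv h'
  omega

lemma fibSchedule_disjoint {i' k' : ℕ} (h : IsPos p q i k) (h' : IsPos p q i' k')
    (hne : (i, k) ≠ (i', k')) (he : fibCoarse p i k = fibCoarse p i' k') :
    i ≠ i' ∧ i ≠ fibPiv p i' k' ∧ fibPiv p i k ≠ i' ∧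
      fibPiv p i k ≠ fibPiv p i' k' := by
  have := fibPiv_lt h
  have := fibPiv_lt h'
  rcases lt_trichotomy k k' with hk | rfl | hk
  · have := lt_fibPiv_of_fibCoarse_eq h h' hk he
    omega
  · have hi : i ≠ i' := fun hi => hne (by rw [hi])
    exact ⟨hi, fibSchedule_disjoint_of_eq_column h h' hi he⟩
  · have := lt_fibPiv_of_fibCoarse_eq h' h hk he.symm
    omega

lemma fibCoarse_lt_of_column_lt {k' : ℕ} (h : IsPos p q i k) (hk' : 1 ≤ k') (hk : k' < k) :
    fibCoarse p i k' < fibCoarse p i k := by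
  have h' : IsPos p q i k' :=
    ⟨hk', by have := h.2.1; omega, by have := h.2.2.1; omega, h.2.2.2⟩
  have := fibY_mono (show i - k + 1 ≤ i - k' + 1 by omega)
  have := fibCoarse_add_fibY h
  have := fibCoarse_add_fibY h'
  omega

lemma fibCoarse_fibPiv_lt_of_column_lt {k' : ℕ} (h : IsPos p q i k) (hk' : 1 ≤ k')
    (hk : k' < k) (hkp : k' < fibPiv p i k) :
    fibCoarse p (fibPiv p i k) k' < fibCoarse p i k := by
  have hpiv : IsPos p q (fibPiv p i k) k' :=
    ⟨hk', by have := h.2.1; omega, hkp, by have := fibPiv_lt h; have := h.2.2.2; omega⟩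
  have := le_fibPiv h
  have := lt_fibY_of_tri_lt (j := fibPiv p i k - k' + 1) (y := fibY (i - k + 1) - 2) (by omega)
  have := fibCoarse_add_fibY h
  have := fibCoarse_add_fibY hpiv
  omega

lemma fibCoarse_lt_fibCoarse_fibPiv (h : IsPos p q i k) (hkp : k < fibPiv p i k) :
    fibCoarse p i k < fibCoarse p (fibPiv p i k) k := by
  have hpiv : IsPos p q (fibPiv p i k) k :=
    ⟨h.1, h.2.1, hkp, by have := fibPiv_lt h; have := h.2.2.2; omega⟩
  have := fibPiv_le h
  have hy : 2 ≤ fibY (i - k + 1) := by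
    by_contra! hy
    rw [show fibY (i - k + 1) - 1 = 0 by omega, tri_zero] at this
    omega
  have := (fibY_le_iff (j := fibPiv p i k - k + 1) (show 1 ≤ fibY (i - k + 1) - 1 by omega)).mpr
    (by omega)
  have := fibCoarse_add_fibY h
  have := fibCoarse_add_fibY hpiv
  omega

theorem fibSchedule_valid : CoarseValidSchedule p q (fibPiv p) (fibCoarse p) :=
  ⟨fun _ _ => fibSchedule_bounds, fun _ _ _ _ => fibSchedule_disjoint,
    fun _ _ _ => fibCoarse_lt_of_column_lt, fun _ _ _ => fibCoarse_fibPiv_lt_of_column_lt,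
    fun _ _ => fibCoarse_lt_fibCoarse_fibPiv⟩

lemma makespan_eq_of_isGreatest {σ : ℕ → ℕ → ℕ} {m : ℕ}
    (h : IsGreatest {t : ℕ | ∃ i k, IsPos p q i k ∧ t = σ i k} m) : makespan p q σ = m :=
  h.csSup_eq

lemma makespan_fibCoarse (hk : IsPos p q (k + 1) k) (hmax : ∀ i k', IsPos p q i k' → k' ≤ k) :
    makespan p q (fibCoarse p) = fibX p + 2 * k - 2 := by
  refine makespan_eq_of_isGreatest ⟨⟨k + 1, k, hk, ?_⟩, ?_⟩
  · have := fibCoarse_add_fibY hk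
    rw [show k + 1 - k + 1 = 2 by omega, fibY_two] at this
    omega
  · rintro _ ⟨i, k', h, rfl⟩
    have := fibCoarse_add_fibY h
    have := one_le_fibY (i - k' + 1)
    have := hmax i k' h
    omega

end Schedule

theorem fibonacci_coarse_general (p q : ℕ) (hq : 1 ≤ q) :
    CoarseValidSchedule p q (fibPiv p) (fibCoarse p) ∧
    (q < p → makespan p q (fibCoarse p) = fibX p + 2 * q - 2) ∧
    (p = q → 1 < q → makespan p q (fibCoarse p) = fibX p + 2 * q - 4) := by
  refine ⟨fibSchedule_valid, fun hqp => ?_, fun hpq hq1 => ?_⟩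
  · exact makespan_fibCoarse ⟨hq, by omega, by omega, hqp⟩
      fun _ _ h => h.2.1.trans (min_le_right _ _)
  · subst hpq
    have hlast : IsPos p p (p - 1 + 1) (p - 1) := ⟨by omega, by omega, by omega, by omega⟩
    rw [makespan_fibCoarse hlast fun _ _ h => by have := h.2.2.1; have := h.2.2.2; omega]
    omega

/-- In the coarse-grain model, the Fibonacci schedule (position `(i, k)` zeroed out at
time step `coarse(i, k)`, with the Fibonacci pairing) is a valid coarse-grain schedule,
and its makespan equals `x + 2q - 2` when `p > q ≥ 1` and `x + 2q - 4` when
`p = q > 1`, where `x` is the least positive integer with `x(x+1)/2 ≥ p - 1`. -/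
theorem fibonacci_coarse (p q : ℕ) (hq : 1 ≤ q) (hpq : q ≤ p) :
    CoarseValidSchedule p q (fibPiv p) (fibCoarse p) ∧
    (q < p → makespan p q (fibCoarse p) = fibX p + 2 * q - 2) ∧
    (p = q → 1 < q → makespan p q (fibCoarse p) = fibX p + 2 * q - 4) :=
  fibonacci_coarse_general p q hq

end CoarseQR
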